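/- Fix W ≥ 2, a flow size distribution θ ∈ ℝ^W with θ_k > 0 and Σθ_k = 1, and p ∈ (0,1), q = 1 − p. For Sample and Hold, let d₀ = Σ_{k=1}^W q^k θ_k and d_j = Σ_{k=j}^W p q^{k−j} θ_k for 1 ≤ j ≤ W, and let B̃_SH be the W×W upper-triangular matrix with entries p q^{k−j} for 1 ≤ j ≤ k ≤ W. Then p(d₀ + d₁) = d₁, and consequently B̃_SH⁻¹ · [p(d₀+d₁), d₂, …, d_W]ᵀ = θ; i.e., the closed-form Sample and Hold estimator θ̂ = (1/n)·B̃_SH⁻¹·[p(M'₀+M'₁), M'₂, …, M'_W]ᵀ is unbiased, since E[M'_j] = n d_j for all j. -/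

import Mathlib

/-!
The identity `p (d₀ + d₁) = d₁` is termwise: `p (q^k + p q^(k-1)) = p q^(k-1) (q + p) = p q^(k-1)`.
It says that the modified observation vector `[p(d₀+d₁), d₂, …, d_W]` is exactly `B̃_SH θ`, and
`B̃_SH` is upper triangular with diagonal `p ≠ 0`, hence invertible.
-/

open Matrix Finset

namespace SampleHold

variable {R : Type*} {n : ℕ}

section CommRing

variable [CommRing R]

def matrix (p q : R) : Matrix (Fin n) (Fin n) R :=
  of fun j k => if (j : ℕ) ≤ (k : ℕ) then p * q ^ ((k : ℕ) - (j : ℕ)) else 0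

theorem matrix_isUpperTriangular (p q : R) : (matrix (n := n) p q).IsUpperTriangular :=
  fun _ _ hkj => if_neg (Nat.not_le.mpr hkj)

theorem det_matrix (p q : R) : (matrix (n := n) p q).det = p ^ n := by
  rw [det_of_isUpperTriangular (matrix_isUpperTriangular p q)]
  simp [matrix]

theorem matrix_mulVec_apply (p q : R) (θ : Fin n → R) (j : Fin n) :
    (matrix p q *ᵥ θ) j = ∑ k ∈ univ.filter (fun k => j ≤ k), p * q ^ ((k : ℕ) - (j : ℕ)) * θ k := by
  simp only [mulVec, dotProduct, matrix, of_apply, sum_filter, Fin.le_def, ite_mul, zero_mul]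

theorem matrix_mulVec_apply_zero (p q : R) (θ : Fin n → R) (hn : 0 < n) :
    (matrix p q *ᵥ θ) ⟨0, hn⟩ = ∑ k : Fin n, p * q ^ (k : ℕ) * θ k := by
  simp only [mulVec, dotProduct, matrix, of_apply, Nat.zero_le, if_true, Nat.sub_zero, mul_assoc]

theorem mul_sum_add_sum_eq_sum {ι : Type*} (s : Finset ι) (e : ι → ℕ) (p q : R) (θ : ι → R)
    (hq : q = 1 - p) :
    p * (∑ k ∈ s, q ^ (e k + 1) * θ k + ∑ k ∈ s, p * q ^ e k * θ k) =
      ∑ k ∈ s, p * q ^ e k * θ k := by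
  rw [← sum_add_distrib, mul_sum]
  refine sum_congr rfl fun k _ => ?_
  subst hq
  ring

end CommRing

theorem isUnit_det_matrix [Field R] {p : R} (hp : p ≠ 0) (q : R) :
    IsUnit (matrix (n := n) p q).det := by
  rw [det_matrix]
  exact (pow_ne_zero n hp).isUnit

end SampleHold

open SampleHold in
/-- Lean index `j : Fin W` stands for flow size `j + 1`, so `dd j` is `d_{j+1}`. -/
theorem stmt_19 (W : ℕ) (hW : 2 ≤ W)
    (θ : Fin W → ℝ)
    (p q : ℝ) (hp0 : 0 < p) (hq : q = 1 - p)
    (d0 : ℝ) (hd0 : d0 = ∑ k : Fin W, q ^ ((k : ℕ) + 1) * θ k)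
    (dd : Fin W → ℝ)
    (hdd : ∀ j, dd j = ∑ k ∈ Finset.univ.filter (fun k : Fin W => j ≤ k),
      p * q ^ ((k : ℕ) - (j : ℕ)) * θ k)
    (Bt : Matrix (Fin W) (Fin W) ℝ)
    (hBt : ∀ j k : Fin W, Bt j k =
      if (j : ℕ) ≤ (k : ℕ) then p * q ^ ((k : ℕ) - (j : ℕ)) else 0)
    (v : Fin W → ℝ)
    (hv : ∀ j : Fin W, v j = if (j : ℕ) = 0 then p * (d0 + dd ⟨0, by omega⟩) else dd j) :
    p * (d0 + dd ⟨0, by omega⟩) = dd ⟨0, by omega⟩ ∧ Bt⁻¹ *ᵥ v = θ := by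
  have hB : Bt = matrix p q := Matrix.ext hBt
  have hd : ∀ j, dd j = (Bt *ᵥ θ) j := fun j => by rw [hdd, hB, matrix_mulVec_apply]
  have hrow : p * (d0 + dd ⟨0, by omega⟩) = dd ⟨0, by omega⟩ := by
    rw [hd, hB, matrix_mulVec_apply_zero, hd0]
    exact mul_sum_add_sum_eq_sum _ _ p q θ hq
  refine ⟨hrow, ?_⟩
  have hvB : v = Bt *ᵥ θ := by
    funext j
    rw [hv, ← hd]
    split_ifs with h
    · rw [Fin.ext (b := ⟨0, by omega⟩) h]
      exact hrow
    · rfl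
  rw [hvB, mulVec_mulVec, nonsing_inv_mul _ (hB ▸ isUnit_det_matrix hp0.ne' q), one_mulVec]
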